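/- arXiv:2412.19368 — 3 statements merged into one kernel-verified Lean document; each statement's English description precedes it below -/
import Mathlib

section
/- Fix integers d, N, K ≥ 1, a time step Δt > 0, and real numbers ΔW^i_k for i = 1,…,N and k = 1,…,K. Let H, H_1, …, H_N : ℝ^d × ℝ^d → ℝ be differentiable. For a discrete curve c = (q_0, (q̃_1, p̃¹_1, p̃²_1), q_1, …, (q̃_K, p̃¹_K, p̃²_K), q_K) with all components in ℝ^d, define the discrete action G_d(c) = Σ_{k=0}^{K−1} Δt [ ⟨p̃²_{k+1}, (q_{k+1} − q̃_{k+1})/Δt⟩ + ⟨p̃¹_{k+1}, (q̃_{k+1} − q_k)/Δt⟩ − H(q̃_{k+1}, (p̃¹_{k+1}+p̃²_{k+1})/2) − Σ_{i=1}^N H_i(q̃_{k+1}, (p̃¹_{k+1}+p̃²_{k+1})/2)·ΔW^i_{k+1}/Δt ]. Suppose the directional derivative of G_d at c vanishes along every variation of the curve whose components δq_0 and δq_K vanish (all other variation components arbitrary). Then, writing 𝗁_k(q,p) := H(q,p) + Σ_{i=1}^N H_i(q,p)·ΔW^i_k/Δt and evaluating its partial gradients ∂_q𝗁_k, ∂_p𝗁_k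 at (q̃_k, (p̃¹_k+p̃²_k)/2), the curve satisfies: (q̃_k − q_{k−1})/Δt = (1/2)∂_p𝗁_k and (q_k − q̃_k)/Δt = (1/2)∂_p𝗁_k and (p̃²_k − p̃¹_k)/Δt = −∂_q𝗁_k for k = 1,…,K, and p̃¹_{k+1} = p̃²_k for k = 1,…,K−1. Consequently q̃_k = (q_{k−1}+q_k)/2 and, setting p_0 := p̃¹_1 and p_k := p̃²_k for k ≥ 1, the stochastic midpoint scheme holds: (q_k − q_{k−1})/Δt = ∂_p𝗁_k((q_{k−1}+q_k)/2, (p_{k−1}+p_k)/2) and (p_k − p_{k−1})/Δt = −∂_q𝗁_k((q_{k−1}+q_k)/2, (p_{k−1}+p_k)/2) for k = 1,…,K. -/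
open scoped RealInnerProductSpace BigOperators

noncomputable section

/-- `ℝ^d` with the Euclidean inner product. -/
abbrev Evec (d : ℕ) := EuclideanSpace ℝ (Fin d)

/-- The space of discrete curves `(q_0, (q̃_1, p̃¹_1, p̃²_1), q_1, …, (q̃_K, p̃¹_K, p̃²_K), q_K)`:
the first component collects `q_0, …, q_K`, the remaining three collect the midpoint
quantities `q̃_k, p̃¹_k, p̃²_k` for `k = 1, …, K` (index `j : Fin K` stands for step `j+1`). -/
abbrev DiscreteCurve (d K : ℕ) :=
  (Fin (K + 1) → Evec d) × (Fin K → Evec d) × (Fin K → Evec d) × (Fin K → Evec d)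

/-- The total step Hamiltonian `𝗁_k(q,p) = H(q,p) + Σ_i H_i(q,p)·ΔW^i_k/Δt`. -/
def hamTot {d N : ℕ} (H : Evec d × Evec d → ℝ) (Hi : Fin N → Evec d × Evec d → ℝ)
    (Δt : ℝ) (ΔW : Fin N → ℝ) (q p : Evec d) : ℝ :=
  H (q, p) + ∑ i, Hi i (q, p) * (ΔW i / Δt)

/-- Partial gradient `∂_q 𝗁_k` of the total step Hamiltonian in its first argument. -/
def gradQ {d N : ℕ} (H : Evec d × Evec d → ℝ) (Hi : Fin N → Evec d × Evec d → ℝ)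
    (Δt : ℝ) (ΔW : Fin N → ℝ) (q p : Evec d) : Evec d :=
  gradient (fun x => hamTot H Hi Δt ΔW x p) q

/-- Partial gradient `∂_p 𝗁_k` of the total step Hamiltonian in its second argument. -/
def gradP {d N : ℕ} (H : Evec d × Evec d → ℝ) (Hi : Fin N → Evec d × Evec d → ℝ)
    (Δt : ℝ) (ΔW : Fin N → ℝ) (q p : Evec d) : Evec d :=
  gradient (fun y => hamTot H Hi Δt ΔW q y) p

/-- The discrete action
`G_d(c) = Σ_{k=0}^{K−1} Δt [⟨p̃²_{k+1}, (q_{k+1} − q̃_{k+1})/Δt⟩ + ⟨p̃¹_{k+1}, (q̃_{k+1} − q_k)/Δt⟩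
− H(q̃_{k+1}, (p̃¹_{k+1}+p̃²_{k+1})/2) − Σ_i H_i(q̃_{k+1}, (p̃¹_{k+1}+p̃²_{k+1})/2)·ΔW^i_{k+1}/Δt]`. -/
def discreteAction {d N K : ℕ} (H : Evec d × Evec d → ℝ) (Hi : Fin N → Evec d × Evec d → ℝ)
    (Δt : ℝ) (ΔW : Fin N → Fin K → ℝ) (c : DiscreteCurve d K) : ℝ :=
  ∑ j : Fin K, Δt *
    (⟪c.2.2.2 j, (1 / Δt) • (c.1 j.succ - c.2.1 j)⟫ +
     ⟪c.2.2.1 j, (1 / Δt) • (c.2.1 j - c.1 j.castSucc)⟫ -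
     hamTot H Hi Δt (fun i => ΔW i j) (c.2.1 j) ((1 / 2 : ℝ) • (c.2.2.1 j + c.2.2.2 j)))

lemma inner_gradient_eq_fderiv {d : ℕ} {f : Evec d → ℝ} {x : Evec d}
    (hf : DifferentiableAt ℝ f x) (u : Evec d) :
    ⟪gradient f x, u⟫ = fderiv ℝ f x u := by
  have h := hf.hasGradientAt
  rw [hasGradientAt_iff_hasFDerivAt] at h
  rw [h.fderiv]
  simp [InnerProductSpace.toDual_apply_apply]

lemma hamTot_diff {d N : ℕ} (H : Evec d × Evec d → ℝ) (Hi : Fin N → Evec d × Evec d → ℝ)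
    (Δt : ℝ) (ΔW : Fin N → ℝ) (hH : Differentiable ℝ H) (hHi : ∀ i, Differentiable ℝ (Hi i)) :
    Differentiable ℝ (fun z : Evec d × Evec d => hamTot H Hi Δt ΔW z.1 z.2) := by
  unfold hamTot
  exact hH.add (Differentiable.fun_sum fun i _ => (hHi i).mul_const _)

lemma ham_deriv {d N : ℕ} (H : Evec d × Evec d → ℝ) (Hi : Fin N → Evec d × Evec d → ℝ)
    (Δt : ℝ) (ΔW : Fin N → ℝ) (hH : Differentiable ℝ H) (hHi : ∀ i, Differentiable ℝ (Hi i))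
    (q p u w : Evec d) :
    HasDerivAt (fun ε : ℝ => hamTot H Hi Δt ΔW (q + ε • u) (p + ε • w))
      (⟪gradQ H Hi Δt ΔW q p, u⟫ + ⟪gradP H Hi Δt ΔW q p, w⟫) 0 := by
  have hdiff : Differentiable ℝ (fun z : Evec d × Evec d => hamTot H Hi Δt ΔW z.1 z.2) :=
    hamTot_diff H Hi Δt ΔW hH hHi
  set h : Evec d × Evec d → ℝ := fun z => hamTot H Hi Δt ΔW z.1 z.2 with hdef
  have h1 : HasDerivAt (fun ε : ℝ => q + ε • u) u 0 := by
    simpa using ((hasDerivAt_id (0:ℝ)).smul_const u).const_add q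
  have h2 : HasDerivAt (fun ε : ℝ => p + ε • w) w 0 := by
    simpa using ((hasDerivAt_id (0:ℝ)).smul_const w).const_add p
  have hcurve : HasDerivAt (fun ε : ℝ => (q + ε • u, p + ε • w)) ((u, w) : Evec d × Evec d) 0 :=
    h1.prodMk h2
  have hL : HasFDerivAt h (fderiv ℝ h (q, p)) ((fun ε : ℝ => (q + ε • u, p + ε • w)) 0) := by
    simpa using (hdiff (q, p)).hasFDerivAt
  have hcomp := hL.comp_hasDerivAt 0 hcurve
  have hq : HasFDerivAt (fun x : Evec d => h (x, p))
      ((fderiv ℝ h (q, p)).comp (ContinuousLinearMap.inl ℝ (Evec d) (Evec d))) q := by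
    have : HasFDerivAt (fun x : Evec d => ((x, p) : Evec d × Evec d))
        (ContinuousLinearMap.inl ℝ (Evec d) (Evec d)) q := hasFDerivAt_prodMk_left q p
    exact ((hdiff (q, p)).hasFDerivAt).comp q this
  have hp : HasFDerivAt (fun y : Evec d => h (q, y))
      ((fderiv ℝ h (q, p)).comp (ContinuousLinearMap.inr ℝ (Evec d) (Evec d))) p := by
    have : HasFDerivAt (fun y : Evec d => ((q, y) : Evec d × Evec d))
        (ContinuousLinearMap.inr ℝ (Evec d) (Evec d)) p := hasFDerivAt_prodMk_right q p
    exact ((hdiff (q, p)).hasFDerivAt).comp p this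
  have e1 : ⟪gradQ H Hi Δt ΔW q p, u⟫ = fderiv ℝ h (q, p) ((u, 0) : Evec d × Evec d) := by
    rw [gradQ, inner_gradient_eq_fderiv hq.differentiableAt u, hq.fderiv]
    simp
  have e2 : ⟪gradP H Hi Δt ΔW q p, w⟫ = fderiv ℝ h (q, p) ((0, w) : Evec d × Evec d) := by
    rw [gradP, inner_gradient_eq_fderiv hp.differentiableAt w, hp.fderiv]
    simp
  have : fderiv ℝ h (q, p) ((u, w) : Evec d × Evec d)
      = ⟪gradQ H Hi Δt ΔW q p, u⟫ + ⟪gradP H Hi Δt ΔW q p, w⟫ := by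
    rw [e1, e2, ← map_add]
    norm_num
  exact this ▸ hcomp

lemma first_variation {d N K : ℕ} (H : Evec d × Evec d → ℝ) (Hi : Fin N → Evec d × Evec d → ℝ)
    (Δt : ℝ) (ΔW : Fin N → Fin K → ℝ) (hH : Differentiable ℝ H)
    (hHi : ∀ i, Differentiable ℝ (Hi i))
    (q : Fin (K + 1) → Evec d) (qt p1 p2 : Fin K → Evec d) (δ : DiscreteCurve d K) :
    HasDerivAt (fun ε : ℝ => discreteAction H Hi Δt ΔW ((q, qt, p1, p2) + ε • δ))
      (∑ j : Fin K, Δt *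
        ((⟪p2 j, (1 / Δt) • (δ.1 j.succ - δ.2.1 j)⟫ + ⟪δ.2.2.2 j, (1 / Δt) • (q j.succ - qt j)⟫) +
         (⟪p1 j, (1 / Δt) • (δ.2.1 j - δ.1 j.castSucc)⟫ +
          ⟪δ.2.2.1 j, (1 / Δt) • (qt j - q j.castSucc)⟫) -
         (⟪gradQ H Hi Δt (fun i => ΔW i j) (qt j) ((1/2 : ℝ) • (p1 j + p2 j)), δ.2.1 j⟫ +
          ⟪gradP H Hi Δt (fun i => ΔW i j) (qt j) ((1/2 : ℝ) • (p1 j + p2 j)),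
            (1/2 : ℝ) • (δ.2.2.1 j + δ.2.2.2 j)⟫))) 0 := by
  have hfun : (fun ε : ℝ => discreteAction H Hi Δt ΔW ((q, qt, p1, p2) + ε • δ)) =
      fun ε : ℝ => ∑ j : Fin K, Δt *
        (⟪p2 j + ε • δ.2.2.2 j,
            (1 / Δt) • ((q j.succ + ε • δ.1 j.succ) - (qt j + ε • δ.2.1 j))⟫ +
         ⟪p1 j + ε • δ.2.2.1 j,
            (1 / Δt) • ((qt j + ε • δ.2.1 j) - (q j.castSucc + ε • δ.1 j.castSucc))⟫ -
         hamTot H Hi Δt (fun i => ΔW i j) (qt j + ε • δ.2.1 j)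
           ((1/2 : ℝ) • (p1 j + p2 j) + ε • ((1/2 : ℝ) • (δ.2.2.1 j + δ.2.2.2 j)))) := by
    funext ε
    unfold discreteAction
    refine Finset.sum_congr rfl fun j _ => ?_
    have harg : (1/2 : ℝ) • ((p1 j + ε • δ.2.2.1 j) + (p2 j + ε • δ.2.2.2 j)) =
        (1/2 : ℝ) • (p1 j + p2 j) + ε • ((1/2 : ℝ) • (δ.2.2.1 j + δ.2.2.2 j)) := by
      module
    simp only [Prod.fst_add, Prod.snd_add, Prod.smul_fst, Prod.smul_snd, Pi.add_apply,
      Pi.smul_apply]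
    rw [harg]
  rw [hfun]
  apply HasDerivAt.fun_sum
  intro j _
  apply HasDerivAt.const_mul
  have hv : ∀ (a : Fin K → Evec d) (i : Fin K),
      HasDerivAt (fun ε : ℝ => a i + ε • δ.2.1 i) (δ.2.1 i) 0 := fun a i => by
    simpa using ((hasDerivAt_id (0:ℝ)).smul_const (δ.2.1 i)).const_add (a i)
  have lin : ∀ (x : Evec d) (v : Evec d), HasDerivAt (fun ε : ℝ => x + ε • v) v 0 := fun x v => by
    simpa using ((hasDerivAt_id (0:ℝ)).smul_const v).const_add x
  have hA : HasDerivAt (fun ε : ℝ => ⟪p2 j + ε • δ.2.2.2 j,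
      (1 / Δt) • ((q j.succ + ε • δ.1 j.succ) - (qt j + ε • δ.2.1 j))⟫)
      (⟪p2 j, (1 / Δt) • (δ.1 j.succ - δ.2.1 j)⟫ + ⟪δ.2.2.2 j, (1 / Δt) • (q j.succ - qt j)⟫) 0 := by
    have hg : HasDerivAt (fun ε : ℝ =>
        (1 / Δt) • ((q j.succ + ε • δ.1 j.succ) - (qt j + ε • δ.2.1 j)))
        ((1 / Δt) • (δ.1 j.succ - δ.2.1 j)) 0 :=
      ((lin (q j.succ) (δ.1 j.succ)).fun_sub (lin (qt j) (δ.2.1 j))).fun_const_smul _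
    simpa using (lin (p2 j) (δ.2.2.2 j)).inner ℝ hg
  have hB : HasDerivAt (fun ε : ℝ => ⟪p1 j + ε • δ.2.2.1 j,
      (1 / Δt) • ((qt j + ε • δ.2.1 j) - (q j.castSucc + ε • δ.1 j.castSucc))⟫)
      (⟪p1 j, (1 / Δt) • (δ.2.1 j - δ.1 j.castSucc)⟫ +
       ⟪δ.2.2.1 j, (1 / Δt) • (qt j - q j.castSucc)⟫) 0 := by
    have hg : HasDerivAt (fun ε : ℝ =>
        (1 / Δt) • ((qt j + ε • δ.2.1 j) - (q j.castSucc + ε • δ.1 j.castSucc)))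
        ((1 / Δt) • (δ.2.1 j - δ.1 j.castSucc)) 0 :=
      ((lin (qt j) (δ.2.1 j)).fun_sub (lin (q j.castSucc) (δ.1 j.castSucc))).fun_const_smul _
    simpa using (lin (p1 j) (δ.2.2.1 j)).inner ℝ hg
  have hC : HasDerivAt (fun ε : ℝ => hamTot H Hi Δt (fun i => ΔW i j) (qt j + ε • δ.2.1 j)
      ((1/2 : ℝ) • (p1 j + p2 j) + ε • ((1/2 : ℝ) • (δ.2.2.1 j + δ.2.2.2 j))))
      (⟪gradQ H Hi Δt (fun i => ΔW i j) (qt j) ((1/2 : ℝ) • (p1 j + p2 j)), δ.2.1 j⟫ +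
       ⟪gradP H Hi Δt (fun i => ΔW i j) (qt j) ((1/2 : ℝ) • (p1 j + p2 j)),
         (1/2 : ℝ) • (δ.2.2.1 j + δ.2.2.2 j)⟫) 0 :=
    ham_deriv H Hi Δt (fun i => ΔW i j) hH hHi _ _ _ _
  exact (hA.add hB).sub hC

set_option maxHeartbeats 1000000 in
/-- Variational characterization of the stochastic midpoint scheme on a vector space:
if the directional derivative of the discrete action vanishes along every variation of
the discrete curve fixing the endpoints `q_0, q_K`, then the discrete Euler–Lagrange
equations hold, the midpoint identification `q̃_k = (q_{k−1}+q_k)/2` holds, and with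
`p_0 := p̃¹_1`, `p_k := p̃²_k` the stochastic midpoint scheme holds. -/
theorem discrete_phase_space_principle_midpoint
    (d N K : ℕ) (hd : 1 ≤ d) (hN : 1 ≤ N) (hK : 0 < K)
    (Δt : ℝ) (hΔt : 0 < Δt) (ΔW : Fin N → Fin K → ℝ)
    (H : Evec d × Evec d → ℝ) (Hi : Fin N → Evec d × Evec d → ℝ)
    (hH : Differentiable ℝ H) (hHi : ∀ i, Differentiable ℝ (Hi i))
    (q : Fin (K + 1) → Evec d) (qt p1 p2 : Fin K → Evec d)
    (hcrit : ∀ δ : DiscreteCurve d K, δ.1 0 = 0 → δ.1 (Fin.last K) = 0 →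
      deriv (fun ε : ℝ => discreteAction H Hi Δt ΔW ((q, qt, p1, p2) + ε • δ)) 0 = 0) :
    (∀ j : Fin K, qt j - q j.castSucc =
      (Δt / 2) • gradP H Hi Δt (fun i => ΔW i j) (qt j) ((1 / 2 : ℝ) • (p1 j + p2 j))) ∧
    (∀ j : Fin K, q j.succ - qt j =
      (Δt / 2) • gradP H Hi Δt (fun i => ΔW i j) (qt j) ((1 / 2 : ℝ) • (p1 j + p2 j))) ∧
    (∀ j : Fin K, p2 j - p1 j =
      -(Δt • gradQ H Hi Δt (fun i => ΔW i j) (qt j) ((1 / 2 : ℝ) • (p1 j + p2 j)))) ∧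
    (∀ (j : Fin K) (hj : (j : ℕ) + 1 < K), p1 ⟨(j : ℕ) + 1, hj⟩ = p2 j) ∧
    (∀ j : Fin K, qt j = (1 / 2 : ℝ) • (q j.castSucc + q j.succ)) ∧
    (∀ j : Fin K,
      (q j.succ - q j.castSucc =
        Δt • gradP H Hi Δt (fun i => ΔW i j)
          ((1 / 2 : ℝ) • (q j.castSucc + q j.succ))
          ((1 / 2 : ℝ) •
            ((Fin.cases (p1 ⟨0, hK⟩) (fun i => p2 i) j.castSucc : Evec d) +
             (Fin.cases (p1 ⟨0, hK⟩) (fun i => p2 i) j.succ : Evec d)))) ∧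
      ((Fin.cases (p1 ⟨0, hK⟩) (fun i => p2 i) j.succ : Evec d) -
          (Fin.cases (p1 ⟨0, hK⟩) (fun i => p2 i) j.castSucc : Evec d) =
        -(Δt • gradQ H Hi Δt (fun i => ΔW i j)
          ((1 / 2 : ℝ) • (q j.castSucc + q j.succ))
          ((1 / 2 : ℝ) •
            ((Fin.cases (p1 ⟨0, hK⟩) (fun i => p2 i) j.castSucc : Evec d) +
             (Fin.cases (p1 ⟨0, hK⟩) (fun i => p2 i) j.succ : Evec d)))))) := by
  have hΔt' : Δt ≠ 0 := ne_of_gt hΔt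
  have hinv : Δt * (1 / Δt) = 1 := by field_simp
  have hEL : ∀ δ : DiscreteCurve d K, δ.1 0 = 0 → δ.1 (Fin.last K) = 0 →
      (∑ j : Fin K, Δt *
        ((⟪p2 j, (1 / Δt) • (δ.1 j.succ - δ.2.1 j)⟫ + ⟪δ.2.2.2 j, (1 / Δt) • (q j.succ - qt j)⟫) +
         (⟪p1 j, (1 / Δt) • (δ.2.1 j - δ.1 j.castSucc)⟫ +
          ⟪δ.2.2.1 j, (1 / Δt) • (qt j - q j.castSucc)⟫) -
         (⟪gradQ H Hi Δt (fun i => ΔW i j) (qt j) ((1/2 : ℝ) • (p1 j + p2 j)), δ.2.1 j⟫ +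
          ⟪gradP H Hi Δt (fun i => ΔW i j) (qt j) ((1/2 : ℝ) • (p1 j + p2 j)),
            (1/2 : ℝ) • (δ.2.2.1 j + δ.2.2.2 j)⟫))) = 0 := by
    intro δ h0 hl
    rw [← (first_variation H Hi Δt ΔW hH hHi q qt p1 p2 δ).deriv]
    exact hcrit δ h0 hl
  -- key1 : variation in p1
  have key1 : ∀ m : Fin K, qt m - q m.castSucc =
      (Δt / 2) • gradP H Hi Δt (fun i => ΔW i m) (qt m) ((1 / 2 : ℝ) • (p1 m + p2 m)) := by
    intro m
    have hv : ∀ v : Evec d,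
        ⟪qt m - q m.castSucc - (Δt / 2) • gradP H Hi Δt (fun i => ΔW i m) (qt m)
          ((1 / 2 : ℝ) • (p1 m + p2 m)), v⟫ = 0 := by
      intro v
      have h := hEL ((0, 0, Pi.single m v, 0) : DiscreteCurve d K) rfl rfl
      rw [Finset.sum_eq_single_of_mem m (Finset.mem_univ m)] at h
      · simp only [Pi.single_eq_same, Pi.zero_apply, sub_zero, zero_sub, smul_zero, add_zero,
          zero_add, inner_zero_left, inner_zero_right, smul_neg, inner_neg_right,
          real_inner_smul_right] at h
        have h' := (mul_eq_zero.mp h).resolve_left hΔt'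
        rw [inner_sub_right, real_inner_comm (qt m) v, real_inner_comm (q m.castSucc) v] at h'
        simp only [inner_sub_left, real_inner_smul_left]
        linear_combination Δt * h' + (⟪q m.castSucc, v⟫ - ⟪qt m, v⟫) * hinv
      · intro j _ hj
        simp [Pi.single_eq_of_ne hj]
    have h0 := hv (qt m - q m.castSucc - (Δt / 2) • gradP H Hi Δt (fun i => ΔW i m) (qt m)
      ((1 / 2 : ℝ) • (p1 m + p2 m)))
    rw [inner_self_eq_zero, sub_eq_zero] at h0
    exact h0
  -- key2 : variation in p2
  have key2 : ∀ m : Fin K, q m.succ - qt m =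
      (Δt / 2) • gradP H Hi Δt (fun i => ΔW i m) (qt m) ((1 / 2 : ℝ) • (p1 m + p2 m)) := by
    intro m
    have hv : ∀ v : Evec d,
        ⟪q m.succ - qt m - (Δt / 2) • gradP H Hi Δt (fun i => ΔW i m) (qt m)
          ((1 / 2 : ℝ) • (p1 m + p2 m)), v⟫ = 0 := by
      intro v
      have h := hEL ((0, 0, 0, Pi.single m v) : DiscreteCurve d K) rfl rfl
      rw [Finset.sum_eq_single_of_mem m (Finset.mem_univ m)] at h
      · simp only [Pi.single_eq_same, Pi.zero_apply, sub_zero, zero_sub, smul_zero, add_zero,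
          zero_add, inner_zero_left, inner_zero_right, smul_neg, inner_neg_right,
          real_inner_smul_right] at h
        have h' := (mul_eq_zero.mp h).resolve_left hΔt'
        rw [inner_sub_right, real_inner_comm (qt m) v, real_inner_comm (q m.succ) v] at h'
        simp only [inner_sub_left, real_inner_smul_left]
        linear_combination Δt * h' + (⟪qt m, v⟫ - ⟪q m.succ, v⟫) * hinv
      · intro j _ hj
        simp [Pi.single_eq_of_ne hj]
    have h0 := hv (q m.succ - qt m - (Δt / 2) • gradP H Hi Δt (fun i => ΔW i m) (qt m)
      ((1 / 2 : ℝ) • (p1 m + p2 m)))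
    rw [inner_self_eq_zero, sub_eq_zero] at h0
    exact h0
  -- key3 : variation in qt
  have key3 : ∀ m : Fin K, p2 m - p1 m =
      -(Δt • gradQ H Hi Δt (fun i => ΔW i m) (qt m) ((1 / 2 : ℝ) • (p1 m + p2 m))) := by
    intro m
    have hv : ∀ v : Evec d,
        ⟪p1 m - p2 m - Δt • gradQ H Hi Δt (fun i => ΔW i m) (qt m)
          ((1 / 2 : ℝ) • (p1 m + p2 m)), v⟫ = 0 := by
      intro v
      have h := hEL ((0, Pi.single m v, 0, 0) : DiscreteCurve d K) rfl rfl
      rw [Finset.sum_eq_single_of_mem m (Finset.mem_univ m)] at h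
      · simp only [Pi.single_eq_same, Pi.zero_apply, sub_zero, zero_sub, smul_zero, add_zero,
          zero_add, inner_zero_left, inner_zero_right, smul_neg, inner_neg_right,
          real_inner_smul_right] at h
        have h' := (mul_eq_zero.mp h).resolve_left hΔt'
        simp only [inner_sub_left, real_inner_smul_left]
        linear_combination Δt * h' + (⟪p2 m, v⟫ - ⟪p1 m, v⟫) * hinv
      · intro j _ hj
        simp [Pi.single_eq_of_ne hj]
    have h0 := hv (p1 m - p2 m - Δt • gradQ H Hi Δt (fun i => ΔW i m) (qt m)
      ((1 / 2 : ℝ) • (p1 m + p2 m)))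
    rw [inner_self_eq_zero, sub_eq_zero] at h0
    rw [← neg_sub (p1 m) (p2 m), h0]
  -- key4 : variation in interior q
  have key4 : ∀ (j : Fin K) (hj : (j : ℕ) + 1 < K), p1 ⟨(j : ℕ) + 1, hj⟩ = p2 j := by
    intro j hj
    have hv : ∀ v : Evec d, ⟪p2 j - p1 ⟨(j : ℕ) + 1, hj⟩, v⟫ = 0 := by
      intro v
      set m : Fin (K + 1) := ⟨(j : ℕ) + 1, by omega⟩ with hm
      have h0 : (Pi.single m v : Fin (K + 1) → Evec d) 0 = 0 := by
        apply Pi.single_eq_of_ne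
        simp [hm, Fin.ext_iff]
      have hlst : (Pi.single m v : Fin (K + 1) → Evec d) (Fin.last K) = 0 := by
        apply Pi.single_eq_of_ne
        simp [hm, Fin.ext_iff]
        omega
      have h := hEL ((Pi.single m v, 0, 0, 0) : DiscreteCurve d K) h0 hlst
      have hsplit : ∀ j' : Fin K, Δt *
          ((⟪p2 j', (1 / Δt) • ((Pi.single m v : Fin (K+1) → Evec d) j'.succ -
              (0 : Fin K → Evec d) j')⟫ +
            ⟪(0 : Fin K → Evec d) j', (1 / Δt) • (q j'.succ - qt j')⟫) +
           (⟪p1 j', (1 / Δt) • ((0 : Fin K → Evec d) j' -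
              (Pi.single m v : Fin (K+1) → Evec d) j'.castSucc)⟫ +
            ⟪(0 : Fin K → Evec d) j', (1 / Δt) • (qt j' - q j'.castSucc)⟫) -
           (⟪gradQ H Hi Δt (fun i => ΔW i j') (qt j') ((1/2 : ℝ) • (p1 j' + p2 j')),
              (0 : Fin K → Evec d) j'⟫ +
            ⟪gradP H Hi Δt (fun i => ΔW i j') (qt j') ((1/2 : ℝ) • (p1 j' + p2 j')),
              (1/2 : ℝ) • ((0 : Fin K → Evec d) j' + (0 : Fin K → Evec d) j')⟫)) =
          ⟪p2 j', (Pi.single m v : Fin (K+1) → Evec d) j'.succ⟫ -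
          ⟪p1 j', (Pi.single m v : Fin (K+1) → Evec d) j'.castSucc⟫ := by
        intro j'
        simp only [Pi.zero_apply, sub_zero, zero_sub, smul_zero, add_zero, zero_add,
          inner_zero_left, inner_zero_right, smul_neg, inner_neg_right, real_inner_smul_right]
        field_simp
        ring
      rw [Finset.sum_congr rfl fun j' _ => hsplit j', Finset.sum_sub_distrib] at h
      rw [Finset.sum_eq_single_of_mem ⟨(j : ℕ), by omega⟩ (Finset.mem_univ _)
          (fun b _ hb => by
            have hbv : (b : ℕ) ≠ (j : ℕ) := fun hc => hb (Fin.ext hc)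
            have hbne : b.succ ≠ m := by
              intro hc
              have hv2 := congrArg Fin.val hc
              simp only [hm, Fin.val_succ] at hv2
              omega
            rw [Pi.single_eq_of_ne hbne, inner_zero_right]),
        Finset.sum_eq_single_of_mem ⟨(j : ℕ) + 1, hj⟩ (Finset.mem_univ _)
          (fun b _ hb => by
            have hbv : (b : ℕ) ≠ (j : ℕ) + 1 := fun hc => hb (Fin.ext hc)
            have hbne : b.castSucc ≠ m := by
              intro hc
              have hv2 := congrArg Fin.val hc
              simp only [hm, Fin.coe_castSucc] at hv2
              omega
            rw [Pi.single_eq_of_ne hbne, inner_zero_right])] at h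
      have e1 : ((⟨(j : ℕ), by omega⟩ : Fin K).succ) = m := by
        simp [hm, Fin.ext_iff]
      have e2 : ((⟨(j : ℕ) + 1, hj⟩ : Fin K).castSucc) = m := by
        simp [hm, Fin.ext_iff]
      rw [e1, e2, Pi.single_eq_same] at h
      have ej : (⟨(j : ℕ), by omega⟩ : Fin K) = j := by simp [Fin.ext_iff]
      rw [ej] at h
      rw [inner_sub_left]
      linarith
    have h0 := hv (p2 j - p1 ⟨(j : ℕ) + 1, hj⟩)
    rw [inner_self_eq_zero, sub_eq_zero] at h0
    exact h0.symm
  -- midpoint identity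
  have key5 : ∀ j : Fin K, qt j = (1 / 2 : ℝ) • (q j.castSucc + q j.succ) := by
    intro j
    have h1 := sub_eq_iff_eq_add.mp (key1 j)
    have h2 := sub_eq_iff_eq_add.mp (key2 j)
    set g := gradP H Hi Δt (fun i => ΔW i j) (qt j) ((1 / 2 : ℝ) • (p1 j + p2 j)) with hg
    rw [h2, h1]
    module
  -- Fin.cases values
  have hsuccval : ∀ j : Fin K,
      (Fin.cases (p1 ⟨0, hK⟩) (fun i => p2 i) j.succ : Evec d) = p2 j := fun j => by
    simp
  have hcastval : ∀ j : Fin K,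
      (Fin.cases (p1 ⟨0, hK⟩) (fun i => p2 i) j.castSucc : Evec d) = p1 j := by
    rintro ⟨jv, hjv⟩
    match jv, hjv with
    | 0, hjv => 
      have : ((⟨0, hjv⟩ : Fin K).castSucc) = (0 : Fin (K+1)) := by simp [Fin.ext_iff]
      rw [this, Fin.cases_zero]
    | (i+1), hjv =>
      have : ((⟨i+1, hjv⟩ : Fin K).castSucc) = ((⟨i, by omega⟩ : Fin K).succ) := by
        simp [Fin.ext_iff]
      rw [this, Fin.cases_succ]
      exact (key4 ⟨i, by omega⟩ hjv).symm
  refine ⟨key1, key2, key3, key4, key5, ?_⟩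
  intro j
  constructor
  · rw [hsuccval j, hcastval j, ← key5 j]
    have h1 := sub_eq_iff_eq_add.mp (key1 j)
    have h2 := sub_eq_iff_eq_add.mp (key2 j)
    set g := gradP H Hi Δt (fun i => ΔW i j) (qt j) ((1 / 2 : ℝ) • (p1 j + p2 j)) with hg
    rw [h2, h1]
    module
  · rw [hsuccval j, hcastval j, ← key5 j]
    exact key3 j
end
end

section
/- Let R > 0, let 𝕀⁻¹ be a 3×3 real matrix with operator norm ‖𝕀⁻¹‖, let χ ∈ ℝ³, Δt > 0, w̄ ∈ ℝ, and Π ∈ ℝ³ with ‖Π‖ = R. Define F : ℝ³ × ℝ³ → ℝ³ × ℝ³ by F(A,B) := ( Π − (Δt/2)ξ×A + (Δt²/4)(ξ·A)ξ , Π − Δt(ξ×A + (1/2)ξ×B) + (Δt²/4)(ξ·B)ξ ), where ξ := (1/2)𝕀⁻¹((A+B)/2) + (1/2)χ·(w̄/Δt). If ‖𝕀⁻¹‖·R·Δt + ‖χ‖·|w̄| ≤ 1/4, then F maps the product of closed balls {‖A‖ ≤ 2R} × {‖B‖ ≤ 2R} into itself. -/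
/-!
Write `ξ` for the midpoint angular velocity and `t := Δt ‖ξ‖`. On the balls, the hypothesis
gives `t ≤ ‖𝕀⁻¹‖ R Δt + ‖χ‖ |w̄| / 2 ≤ 1/4`. Bounding cross products by `‖ξ‖ ‖·‖` and the
terms `(ξ·X) ξ` by `‖ξ‖² ‖X‖`, the two components of `F` have norm at most
`R + t R + t² R / 2` and `R + 3 t R + t² R / 2`, both below `2R` when `t ≤ 1/4`.
-/

open Matrix

noncomputable section

/-- The Euclidean norm on `ℝ³ = Fin 3 → ℝ`. -/
def e3norm (v : Fin 3 → ℝ) : ℝ := Real.sqrt (v ⬝ᵥ v)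

/-- The operator norm of a 3×3 real matrix with respect to the Euclidean norm. -/
def eOpNorm (M : Matrix (Fin 3) (Fin 3) ℝ) : ℝ :=
  ‖Matrix.toEuclideanCLM (𝕜 := ℝ) M‖

lemma e3norm_eq_norm_toLp (v : Fin 3 → ℝ) : e3norm v = ‖WithLp.toLp 2 v‖ := by
  rw [norm_eq_sqrt_real_inner, EuclideanSpace.inner_eq_star_dotProduct]
  rfl

lemma e3norm_nonneg (v : Fin 3 → ℝ) : 0 ≤ e3norm v := Real.sqrt_nonneg _

lemma sq_e3norm (v : Fin 3 → ℝ) : e3norm v ^ 2 = v ⬝ᵥ v :=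
  Real.sq_sqrt (dotProduct_self_star_nonneg v)

lemma e3norm_add_le (a b : Fin 3 → ℝ) : e3norm (a + b) ≤ e3norm a + e3norm b := by
  simpa only [e3norm_eq_norm_toLp, WithLp.toLp_add] using norm_add_le _ _

lemma e3norm_sub_le (a b : Fin 3 → ℝ) : e3norm (a - b) ≤ e3norm a + e3norm b := by
  simpa only [e3norm_eq_norm_toLp, WithLp.toLp_sub] using norm_sub_le _ _

lemma e3norm_smul (c : ℝ) (v : Fin 3 → ℝ) : e3norm (c • v) = |c| * e3norm v := by
  simp only [e3norm_eq_norm_toLp, WithLp.toLp_smul, norm_smul, Real.norm_eq_abs]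

lemma e3norm_mulVec_le (M : Matrix (Fin 3) (Fin 3) ℝ) (v : Fin 3 → ℝ) :
    e3norm (M *ᵥ v) ≤ eOpNorm M * e3norm v := by
  simpa only [e3norm_eq_norm_toLp, eOpNorm, toEuclideanCLM_toLp] using
    (toEuclideanCLM (𝕜 := ℝ) M).le_opNorm (WithLp.toLp 2 v)

lemma abs_dotProduct_le (a b : Fin 3 → ℝ) : |a ⬝ᵥ b| ≤ e3norm a * e3norm b := by
  simpa only [e3norm_eq_norm_toLp, EuclideanSpace.inner_eq_star_dotProduct, star_trivial,
    dotProduct_comm b] using abs_real_inner_le_norm (WithLp.toLp 2 a) (WithLp.toLp 2 b)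

lemma e3norm_cross_le (a b : Fin 3 → ℝ) : e3norm (a ⨯₃ b) ≤ e3norm a * e3norm b := by
  rw [← sq_le_sq₀ (e3norm_nonneg _) (mul_nonneg (e3norm_nonneg a) (e3norm_nonneg b)),
    mul_pow, sq_e3norm, sq_e3norm, sq_e3norm, cross_dot_cross, dotProduct_comm b a]
  nlinarith [sq_nonneg (a ⬝ᵥ b)]

lemma e3norm_dotProduct_smul_le (c : ℝ) (ξ X : Fin 3 → ℝ) :
    e3norm ((c * (ξ ⬝ᵥ X)) • ξ) ≤ |c| * e3norm ξ ^ 2 * e3norm X := by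
  rw [e3norm_smul, abs_mul]
  calc |c| * |ξ ⬝ᵥ X| * e3norm ξ ≤ |c| * (e3norm ξ * e3norm X) * e3norm ξ := by
        gcongr
        exacts [e3norm_nonneg ξ, abs_dotProduct_le ξ X]
    _ = |c| * e3norm ξ ^ 2 * e3norm X := by ring

section MidpointStep

variable {Δt : ℝ} (P ξ A B : Fin 3 → ℝ)

lemma e3norm_midpointStep_fst_le (hΔt : 0 ≤ Δt) :
    e3norm (P - (Δt / 2) • (ξ ⨯₃ A) + (Δt ^ 2 / 4 * (ξ ⬝ᵥ A)) • ξ) ≤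
      e3norm P + Δt * e3norm ξ / 2 * e3norm A + (Δt * e3norm ξ) ^ 2 / 4 * e3norm A := by
  have hcross : e3norm ((Δt / 2) • (ξ ⨯₃ A)) ≤ Δt / 2 * (e3norm ξ * e3norm A) := by
    rw [e3norm_smul, abs_of_nonneg (by positivity)]
    exact mul_le_mul_of_nonneg_left (e3norm_cross_le ξ A) (by positivity)
  have hdot := e3norm_dotProduct_smul_le (Δt ^ 2 / 4) ξ A
  rw [abs_of_nonneg (by positivity)] at hdot
  calc _ ≤ e3norm (P - (Δt / 2) • (ξ ⨯₃ A)) + e3norm ((Δt ^ 2 / 4 * (ξ ⬝ᵥ A)) • ξ) :=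
        e3norm_add_le _ _
    _ ≤ e3norm P + Δt / 2 * (e3norm ξ * e3norm A) + Δt ^ 2 / 4 * e3norm ξ ^ 2 * e3norm A := by
        linarith [e3norm_sub_le P ((Δt / 2) • (ξ ⨯₃ A))]
    _ = _ := by ring

lemma e3norm_midpointStep_snd_le (hΔt : 0 ≤ Δt) :
    e3norm (P - Δt • (ξ ⨯₃ A + (1 / 2 : ℝ) • (ξ ⨯₃ B)) + (Δt ^ 2 / 4 * (ξ ⬝ᵥ B)) • ξ) ≤
      e3norm P + Δt * e3norm ξ * (e3norm A + e3norm B / 2) +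
        (Δt * e3norm ξ) ^ 2 / 4 * e3norm B := by
  have hhalf : e3norm ((1 / 2 : ℝ) • (ξ ⨯₃ B)) ≤ 1 / 2 * (e3norm ξ * e3norm B) := by
    rw [e3norm_smul, abs_of_nonneg (by norm_num)]
    exact mul_le_mul_of_nonneg_left (e3norm_cross_le ξ B) (by norm_num)
  have hcross : e3norm (Δt • (ξ ⨯₃ A + (1 / 2 : ℝ) • (ξ ⨯₃ B))) ≤
      Δt * (e3norm ξ * e3norm A + 1 / 2 * (e3norm ξ * e3norm B)) := by
    rw [e3norm_smul, abs_of_nonneg hΔt]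
    refine mul_le_mul_of_nonneg_left ?_ hΔt
    linarith [e3norm_add_le (ξ ⨯₃ A) ((1 / 2 : ℝ) • (ξ ⨯₃ B)), e3norm_cross_le ξ A]
  have hdot := e3norm_dotProduct_smul_le (Δt ^ 2 / 4) ξ B
  rw [abs_of_nonneg (by positivity)] at hdot
  calc _ ≤ e3norm (P - Δt • (ξ ⨯₃ A + (1 / 2 : ℝ) • (ξ ⨯₃ B))) +
          e3norm ((Δt ^ 2 / 4 * (ξ ⬝ᵥ B)) • ξ) := e3norm_add_le _ _
    _ ≤ e3norm P + Δt * (e3norm ξ * e3norm A + 1 / 2 * (e3norm ξ * e3norm B)) +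
          Δt ^ 2 / 4 * e3norm ξ ^ 2 * e3norm B := by
        linarith [e3norm_sub_le P (Δt • (ξ ⨯₃ A + (1 / 2 : ℝ) • (ξ ⨯₃ B)))]
    _ = _ := by ring

end MidpointStep

lemma mul_e3norm_midpointVelocity_le (Iinv : Matrix (Fin 3) (Fin 3) ℝ) (χ : Fin 3 → ℝ)
    (wbar : ℝ) {R Δt : ℝ} (hΔt : 0 < Δt) {A B : Fin 3 → ℝ}
    (hA : e3norm A ≤ 2 * R) (hB : e3norm B ≤ 2 * R) :
    Δt * e3norm ((1 / 2 : ℝ) • Iinv *ᵥ ((1 / 2 : ℝ) • (A + B)) + (1 / 2 * (wbar / Δt)) • χ) ≤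
      eOpNorm Iinv * R * Δt + e3norm χ * |wbar| / 2 := by
  have hmid : e3norm ((1 / 2 : ℝ) • (A + B)) ≤ 2 * R := by
    rw [e3norm_smul, abs_of_nonneg (by norm_num)]
    linarith [e3norm_add_le A B]
  have hinertia : e3norm ((1 / 2 : ℝ) • Iinv *ᵥ ((1 / 2 : ℝ) • (A + B))) ≤ eOpNorm Iinv * R := by
    rw [e3norm_smul, abs_of_nonneg (by norm_num)]
    have hI : 0 ≤ eOpNorm Iinv := norm_nonneg _
    nlinarith [e3norm_mulVec_le Iinv ((1 / 2 : ℝ) • (A + B))]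
  have hnoise : Δt * e3norm ((1 / 2 * (wbar / Δt)) • χ) = e3norm χ * |wbar| / 2 := by
    rw [e3norm_smul, abs_mul, abs_div wbar, abs_of_pos hΔt]
    field_simp
    norm_num
  calc _ ≤ Δt * (e3norm ((1 / 2 : ℝ) • Iinv *ᵥ ((1 / 2 : ℝ) • (A + B))) +
          e3norm ((1 / 2 * (wbar / Δt)) • χ)) :=
        mul_le_mul_of_nonneg_left (e3norm_add_le _ _) hΔt.le
    _ ≤ _ := by nlinarith

lemma quarter_mul_le {t a R : ℝ} (ht0 : 0 ≤ t) (ht : t ≤ 1 / 4) (ha0 : 0 ≤ a)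
    (ha : a ≤ 2 * R) : t * a ≤ R / 2 ∧ t ^ 2 * a ≤ R / 8 := by
  have hta : t * a ≤ R / 2 := by nlinarith
  exact ⟨hta, by nlinarith⟩

theorem midpoint_selfmap_maps_balls_into_balls_general
    (R : ℝ) (Iinv : Matrix (Fin 3) (Fin 3) ℝ) (χ : Fin 3 → ℝ)
    (Δt : ℝ) (hΔt : 0 < Δt) (wbar : ℝ) (Pv : Fin 3 → ℝ) (hPv : e3norm Pv = R)
    (F : (Fin 3 → ℝ) × (Fin 3 → ℝ) → (Fin 3 → ℝ) × (Fin 3 → ℝ))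
    (hF : F = fun AB =>
      let ξ : Fin 3 → ℝ :=
        (1 / 2 : ℝ) • Iinv.mulVec ((1 / 2 : ℝ) • (AB.1 + AB.2)) +
          (1 / 2 * (wbar / Δt)) • χ
      (Pv - (Δt / 2) • (ξ ⨯₃ AB.1) + (Δt ^ 2 / 4 * (ξ ⬝ᵥ AB.1)) • ξ,
       Pv - Δt • (ξ ⨯₃ AB.1 + (1 / 2 : ℝ) • (ξ ⨯₃ AB.2)) + (Δt ^ 2 / 4 * (ξ ⬝ᵥ AB.2)) • ξ))
    (hsmall : eOpNorm Iinv * R * Δt + e3norm χ * |wbar| ≤ 1 / 4) :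
    ∀ AB : (Fin 3 → ℝ) × (Fin 3 → ℝ),
      e3norm AB.1 ≤ 2 * R → e3norm AB.2 ≤ 2 * R →
      e3norm (F AB).1 ≤ 2 * R ∧ e3norm (F AB).2 ≤ 2 * R := by
  subst hF
  rintro ⟨A, B⟩ hA hB
  set ξ := (1 / 2 : ℝ) • Iinv *ᵥ ((1 / 2 : ℝ) • (A + B)) + (1 / 2 * (wbar / Δt)) • χ
  have ht : Δt * e3norm ξ ≤ 1 / 4 := by
    linarith [mul_e3norm_midpointVelocity_le Iinv χ wbar hΔt hA hB,
      mul_nonneg (e3norm_nonneg χ) (abs_nonneg wbar)]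
  have ht0 : 0 ≤ Δt * e3norm ξ := mul_nonneg hΔt.le (e3norm_nonneg ξ)
  have hR : 0 ≤ R := hPv ▸ e3norm_nonneg Pv
  obtain ⟨htA, ht2A⟩ := quarter_mul_le ht0 ht (e3norm_nonneg A) hA
  obtain ⟨htB, ht2B⟩ := quarter_mul_le ht0 ht (e3norm_nonneg B) hB
  refine ⟨(e3norm_midpointStep_fst_le Pv ξ A hΔt.le).trans ?_,
    (e3norm_midpointStep_snd_le Pv ξ A B hΔt.le).trans ?_⟩ <;> rw [hPv] <;> linarith

/-- The self-map `F` of the implicit one-step equations of the stochastic variational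
midpoint integrator for the free rigid body with previous momentum `Π`, stochastic
Hamiltonian `h₁(Π) = χ·Π` and truncated Wiener increment `w̄` maps the product of closed
balls of radius `2R` into itself, provided `‖𝕀⁻¹‖·R·Δt + ‖χ‖·|w̄| ≤ 1/4`. -/
theorem midpoint_selfmap_maps_balls_into_balls
    (R : ℝ) (hR : 0 < R) (Iinv : Matrix (Fin 3) (Fin 3) ℝ) (χ : Fin 3 → ℝ)
    (Δt : ℝ) (hΔt : 0 < Δt) (wbar : ℝ) (Pv : Fin 3 → ℝ) (hPv : e3norm Pv = R)
    (F : (Fin 3 → ℝ) × (Fin 3 → ℝ) → (Fin 3 → ℝ) × (Fin 3 → ℝ))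
    (hF : F = fun AB =>
      let ξ : Fin 3 → ℝ :=
        (1 / 2 : ℝ) • Iinv.mulVec ((1 / 2 : ℝ) • (AB.1 + AB.2)) +
          (1 / 2 * (wbar / Δt)) • χ
      (Pv - (Δt / 2) • (ξ ⨯₃ AB.1) + (Δt ^ 2 / 4 * (ξ ⬝ᵥ AB.1)) • ξ,
       Pv - Δt • (ξ ⨯₃ AB.1 + (1 / 2 : ℝ) • (ξ ⨯₃ AB.2)) + (Δt ^ 2 / 4 * (ξ ⬝ᵥ AB.2)) • ξ))
    (hsmall : eOpNorm Iinv * R * Δt + e3norm χ * |wbar| ≤ 1 / 4) :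
    ∀ AB : (Fin 3 → ℝ) × (Fin 3 → ℝ),
      e3norm AB.1 ≤ 2 * R → e3norm AB.2 ≤ 2 * R →
      e3norm (F AB).1 ≤ 2 * R ∧ e3norm (F AB).2 ≤ 2 * R :=
  midpoint_selfmap_maps_balls_into_balls_general R Iinv χ Δt hΔt wbar Pv hPv F hF hsmall
end
end

section
/- For a time step Δt ∈ (0,1), set the truncation level D_{Δt} := √(4·|log Δt|·Δt), let μ be the Gaussian probability measure on ℝ with mean 0 and variance Δt, and let T(x) denote truncation of x at level D_{Δt} (T(x) = x if |x| ≤ D_{Δt}, T(x) = ±D_{Δt} if x ≷ ±D_{Δt}). Then for all sufficiently small Δt > 0: ∫ (x − T(x))² dμ(x) ≤ Δt³ and ∫ (x² − T(x)²) dμ(x) ≤ Δt³. -/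
open MeasureTheory ProbabilityTheory Real Set
open scoped NNReal ENNReal

noncomputable section

/-- Truncation at level `D`: `T_D(x) = x` if `|x| ≤ D`, `D` if `x > D`, `−D` if `x < −D`. -/
def truncAt (D x : ℝ) : ℝ := if |x| ≤ D then x else if x > D then D else -D

namespace TruncAux


lemma trunc_eq_self {D x : ℝ} (h : |x| ≤ D) : truncAt D x = x := if_pos h

lemma trunc_eq_of_ge {D y : ℝ} (hD : 0 ≤ D) (h : D ≤ y) : truncAt D y = D := by
  unfold truncAt
  rcases eq_or_lt_of_le h with rfl | hlt
  · rw [if_pos (by rw [abs_of_nonneg hD])]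
  · rw [if_neg, if_pos hlt]
    rw [abs_of_nonneg (hD.trans h)]
    exact not_le.mpr hlt

lemma trunc_neg {D x : ℝ} (hD : 0 ≤ D) : truncAt D (-x) = - truncAt D x := by
  unfold truncAt
  rw [abs_neg]
  by_cases h1 : |x| ≤ D
  · simp [h1]
  · rw [if_neg h1, if_neg h1]
    push_neg at h1
    rcases lt_abs.mp h1 with hx | hx
    · rw [if_neg (by linarith : ¬ -x > D), if_pos hx]
    · rw [if_pos (by linarith : -x > D), if_neg (by linarith : ¬ x > D)]
      simp

lemma abs_trunc_le {D x : ℝ} (hD : 0 ≤ D) : |truncAt D x| ≤ |x| := by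
  unfold truncAt
  by_cases h1 : |x| ≤ D
  · rw [if_pos h1]
  · push_neg at h1
    rw [if_neg h1.not_ge]
    by_cases h2 : x > D
    · rw [if_pos h2, abs_of_nonneg hD]; exact h1.le
    · rw [if_neg h2, abs_neg, abs_of_nonneg hD]; exact h1.le


end TruncAux


lemma integral_gaussian_mul (v : ℝ≥0) (hv : v ≠ 0) (f : ℝ → ℝ) :
    ∫ x, f x ∂(gaussianReal 0 v) = ∫ x, gaussianPDFReal 0 v x * f x := by
  rw [gaussianReal_of_var_ne_zero 0 hv]
  have hpdf : gaussianPDF 0 v = fun x => ((Real.toNNReal (gaussianPDFReal 0 v x) : ℝ≥0) : ℝ≥0∞) := rfl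
  rw [hpdf, integral_withDensity_eq_integral_smul
    ((measurable_gaussianPDFReal 0 v).real_toNNReal) f]
  congr 1
  ext x
  rw [NNReal.smul_def, smul_eq_mul, Real.coe_toNNReal _ (gaussianPDFReal_nonneg 0 v x)]

lemma integrableOn_pow_exp {c : ℝ} (hc : 0 < c) (n : ℕ) :
    IntegrableOn (fun u : ℝ => u ^ n * Real.exp (-(c * u))) (Ioi 0) := by
  have h := integrableOn_rpow_mul_exp_neg_mul_rpow (p := 1) (s := (n : ℝ)) (b := c)
    ((by norm_num : (-1:ℝ) < 0).trans_le (Nat.cast_nonneg n)) (by norm_num) hc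
  refine h.congr_fun (fun x hx => ?_) measurableSet_Ioi
  dsimp only
  rw [Real.rpow_natCast, Real.rpow_one, neg_mul]

lemma integral_pow_two_exp {c : ℝ} (hc : 0 < c) :
    ∫ u in Ioi (0:ℝ), u ^ 2 * Real.exp (-(c * u)) = 2 / c ^ 3 := by
  have h := integral_rpow_mul_exp_neg_mul_Ioi (a := 3) (by norm_num) hc
  rw [show ((3:ℝ) - 1) = ((2:ℕ) : ℝ) by norm_num] at h
  simp_rw [Real.rpow_natCast] at h
  rw [h, show (3:ℝ) = ((3:ℕ) : ℝ) by norm_num, Real.rpow_natCast,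
    show ((3:ℕ):ℝ) = ((2:ℕ):ℝ) + 1 by norm_num, Real.Gamma_nat_eq_factorial]
  field_simp
  norm_num [Nat.factorial]

lemma integral_pow_one_exp {c : ℝ} (hc : 0 < c) :
    ∫ u in Ioi (0:ℝ), u * Real.exp (-(c * u)) = 1 / c ^ 2 := by
  have h := integral_rpow_mul_exp_neg_mul_Ioi (a := 2) (by norm_num) hc
  rw [show ((2:ℝ) - 1) = ((1:ℕ) : ℝ) by norm_num] at h
  simp_rw [Real.rpow_natCast, pow_one] at h
  rw [h, show (2:ℝ) = ((2:ℕ) : ℝ) by norm_num, Real.rpow_natCast,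
    show ((2:ℕ):ℝ) = ((1:ℕ):ℝ) + 1 by norm_num, Real.Gamma_nat_eq_factorial]
  field_simp
  norm_num [Nat.factorial]

lemma main_bound (t : ℝ) (ht : 0 < t) (hte : t ≤ Real.exp (-9)) (f : ℝ → ℝ)
    (hnn : ∀ x, 0 ≤ f x) (heven : ∀ x, f |x| = f x)
    (hzero : ∀ y, 0 ≤ y → y ≤ Real.sqrt (4 * |Real.log t| * t) → f y = 0)
    (hub : ∀ y, Real.sqrt (4 * |Real.log t| * t) ≤ y →
      f y ≤ (y - Real.sqrt (4 * |Real.log t| * t)) ^ 2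
        + 2 * Real.sqrt (4 * |Real.log t| * t) * (y - Real.sqrt (4 * |Real.log t| * t))) :
    ∫ x, f x ∂(gaussianReal 0 t.toNNReal) ≤ t ^ 3 := by
  have ht1 : t < 1 := lt_of_le_of_lt hte (by rw [Real.exp_lt_one_iff]; norm_num)
  have hlog : Real.log t < 0 := Real.log_neg ht ht1
  set L : ℝ := |Real.log t| with hLdef
  have hLlog : L = -Real.log t := abs_of_neg hlog
  have hL9 : 9 ≤ L := by
    have : Real.log t ≤ -9 := by
      calc Real.log t ≤ Real.log (Real.exp (-9)) := Real.log_le_log ht hte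
        _ = -9 := Real.log_exp _
    linarith [hLlog]
  have hLpos : 0 < L := by linarith
  set D : ℝ := Real.sqrt (4 * L * t) with hDdef
  have hD2 : D ^ 2 = 4 * L * t := Real.sq_sqrt (by positivity)
  have hDpos : 0 < D := Real.sqrt_pos.mpr (by positivity)
  set c : ℝ := D / t with hcdef
  have hcpos : 0 < c := by positivity
  -- key exponential identity
  have hE : Real.exp (-(D ^ 2 / (2 * t))) = t ^ 2 := by
    rw [hD2]
    have h1 : 4 * L * t / (2 * t) = 2 * L := by field_simp; ring
    rw [h1, hLlog, show -(2 * -Real.log t) = Real.log t + Real.log t by ring,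
      Real.exp_add, Real.exp_log ht]
    ring
  have hv : t.toNNReal ≠ 0 := by
    simp only [ne_eq, Real.toNNReal_eq_zero, not_le]
    exact ht
  have hvt : ((t.toNNReal : ℝ≥0) : ℝ) = t := Real.coe_toNNReal t ht.le
  rw [integral_gaussian_mul _ hv f]
  have hgeven : (fun x : ℝ => gaussianPDFReal 0 t.toNNReal x * f x)
      = fun x : ℝ => gaussianPDFReal 0 t.toNNReal |x| * f |x| := by
    funext x
    rw [heven x]
    congr 1
    simp [gaussianPDFReal, sq_abs]
  have habs : ∫ x : ℝ, gaussianPDFReal 0 t.toNNReal |x| * f |x|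
      = 2 * ∫ y in Ioi (0:ℝ), gaussianPDFReal 0 t.toNNReal y * f y :=
    integral_comp_abs (f := fun y => gaussianPDFReal 0 t.toNNReal y * f y)
  rw [hgeven, habs]
  -- dominating function
  set C : ℝ := t ^ 2 / Real.sqrt t with hCdef
  have hCpos : 0 < C := by positivity
  set φ : ℝ → ℝ := fun y => C * (((y - D) ^ 2 + 2 * D * (y - D)) * Real.exp (-(c * (y - D))))
    with hφdef
  set H : ℝ → ℝ := Set.indicator (Ici D) φ with hHdef
  -- integrability of the shifted function
  have hshift : (fun x : ℝ => φ (x + D)) = fun x : ℝ =>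
      C * ((x ^ 2 + 2 * D * x) * Real.exp (-(c * x))) := by
    funext x; simp [hφdef]
  have hk_int : IntegrableOn (fun x : ℝ => C * ((x ^ 2 + 2 * D * x) * Real.exp (-(c * x))))
      (Ioi 0) := by
    have h2 := integrableOn_pow_exp hcpos 2
    have h1 := (integrableOn_pow_exp hcpos 1).const_mul (2 * D)
    refine IntegrableOn.congr_fun ((h2.add h1).const_mul C) (fun x _ => ?_) measurableSet_Ioi
    simp only [Pi.add_apply, pow_one]
    ring
  have hmp := (measurePreserving_add_right (volume : Measure ℝ) D)
  have hemb := measurableEmbedding_addRight D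
  have himg : (fun x : ℝ => x + D) '' Ioi 0 = Ioi D := by
    rw [Set.image_add_const_Ioi, zero_add]
  have hφ_int_IoiD : IntegrableOn φ (Ioi D) := by
    have := (hmp.restrict_image_emb hemb (Ioi 0)).integrable_comp_emb hemb (g := φ)
    rw [himg] at this
    rw [IntegrableOn, ← this]
    have : φ ∘ (fun x : ℝ => x + D) = fun x : ℝ =>
        C * ((x ^ 2 + 2 * D * x) * Real.exp (-(c * x))) := by
      funext x
      simp only [Function.comp_apply]
      exact congrFun hshift x
    rw [this]
    exact hk_int
  have hH_int : IntegrableOn H (Ioi 0) := by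
    have : Integrable H := by
      rw [hHdef]
      exact (hφ_int_IoiD.congr_set_ae Ioi_ae_eq_Ici.symm).integrable_indicator measurableSet_Ici
    exact this.integrableOn
  -- pointwise bound for the density
  have hpdf_le : ∀ y : ℝ, D ≤ y →
      gaussianPDFReal 0 t.toNNReal y ≤ C * Real.exp (-(c * (y - D))) := by
    intro y hy
    simp only [gaussianPDFReal, hvt]
    have h1 : (Real.sqrt (2 * π * t))⁻¹ ≤ (Real.sqrt t)⁻¹ := by
      apply inv_anti₀ (Real.sqrt_pos.mpr ht)
      apply Real.sqrt_le_sqrt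
      nlinarith [Real.pi_gt_three]
    have h2 : Real.exp (-(y - 0) ^ 2 / (2 * t)) ≤ t ^ 2 * Real.exp (-(c * (y - D))) := by
      have key : -(y - 0) ^ 2 / (2 * t) ≤ -(D ^ 2 / (2 * t)) + -(c * (y - D)) := by
        rw [← sub_nonneg]
        have hrw : -(D ^ 2 / (2 * t)) + -(c * (y - D)) - -(y - 0) ^ 2 / (2 * t)
            = (y - D) ^ 2 / (2 * t) := by
          rw [hcdef]; field_simp; ring
        rw [hrw]; positivity
      calc Real.exp (-(y - 0) ^ 2 / (2 * t))
          ≤ Real.exp (-(D ^ 2 / (2 * t)) + -(c * (y - D))) := Real.exp_le_exp.mpr key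
        _ = t ^ 2 * Real.exp (-(c * (y - D))) := by rw [Real.exp_add, hE]
    calc (Real.sqrt (2 * π * t))⁻¹ * Real.exp (-(y - 0) ^ 2 / (2 * t))
        ≤ (Real.sqrt t)⁻¹ * (t ^ 2 * Real.exp (-(c * (y - D)))) :=
          mul_le_mul h1 h2 (Real.exp_nonneg _) (by positivity)
      _ = C * Real.exp (-(c * (y - D))) := by
          rw [hCdef]; ring
  -- pointwise comparison with the dominating function
  have hbound : ∀ y ∈ Ioi (0:ℝ), gaussianPDFReal 0 t.toNNReal y * f y ≤ H y := by
    intro y hy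
    rcases le_or_gt y D with hyD | hyD
    · rw [hzero y (le_of_lt hy) hyD, mul_zero, hHdef]
      apply Set.indicator_nonneg
      intro a ha
      rw [hφdef]
      have ha' : 0 ≤ a - D := sub_nonneg.mpr ha
      have : 0 ≤ (a - D) ^ 2 + 2 * D * (a - D) :=
        add_nonneg (sq_nonneg _) (mul_nonneg (by positivity) ha')
      exact mul_nonneg hCpos.le (mul_nonneg this (Real.exp_nonneg _))
    · rw [hHdef, Set.indicator_of_mem (mem_Ici.mpr hyD.le)]
      calc gaussianPDFReal 0 t.toNNReal y * f y
          ≤ (C * Real.exp (-(c * (y - D)))) * ((y - D) ^ 2 + 2 * D * (y - D)) :=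
            mul_le_mul (hpdf_le y hyD.le) (hub y hyD.le) (hnn y)
              (mul_nonneg hCpos.le (Real.exp_nonneg _))
        _ = φ y := by rw [hφdef]; ring
  have hmono : (∫ y in Ioi (0:ℝ), gaussianPDFReal 0 t.toNNReal y * f y)
      ≤ ∫ y in Ioi (0:ℝ), H y :=
    integral_mono_of_nonneg
      (ae_of_all _ fun y => mul_nonneg (gaussianPDFReal_nonneg _ _ _) (hnn y))
      hH_int
      ((ae_restrict_iff' measurableSet_Ioi).mpr (ae_of_all _ hbound))
  -- value of the dominating integral
  have i2 := integrableOn_pow_exp hcpos 2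
  have i1 := integrableOn_pow_exp hcpos 1
  simp_rw [pow_one] at i1
  have hHval : ∫ y in Ioi (0:ℝ), H y = C * (2 / c ^ 3 + 2 * D * (1 / c ^ 2)) := by
    rw [hHdef, setIntegral_indicator measurableSet_Ici,
      Set.inter_eq_self_of_subset_right (Set.Ici_subset_Ioi.mpr hDpos),
      integral_Ici_eq_integral_Ioi, ← himg,
      hmp.setIntegral_image_emb hemb φ (Ioi 0)]
    have hsplit : ∀ x : ℝ, φ (x + D)
        = C * (x ^ 2 * Real.exp (-(c * x))) + (C * (2 * D)) * (x * Real.exp (-(c * x))) := by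
      intro x
      rw [congrFun hshift x]
      ring
    simp_rw [hsplit]
    rw [integral_add (i2.const_mul C) (i1.const_mul (C * (2 * D))),
      integral_const_mul, integral_const_mul, integral_pow_two_exp hcpos,
      integral_pow_one_exp hcpos]
    ring
  -- final numeric estimate
  have hfinal : 2 * (C * (2 / c ^ 3 + 2 * D * (1 / c ^ 2))) ≤ t ^ 3 := by
    set s : ℝ := Real.sqrt t with hs
    have hs2 : s ^ 2 = t := Real.sq_sqrt ht.le
    have hspos : 0 < s := Real.sqrt_pos.mpr ht
    set r : ℝ := Real.sqrt L with hr
    have hr2 : r ^ 2 = L := Real.sq_sqrt hLpos.le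
    have hr3 : (3:ℝ) ≤ r := by
      have h9 : Real.sqrt 9 ≤ r := Real.sqrt_le_sqrt hL9
      rwa [show (9:ℝ) = 3 ^ 2 by norm_num, Real.sqrt_sq (by norm_num : (0:ℝ) ≤ 3)] at h9
    have hrpos : 0 < r := by linarith
    have hDrs : D = 2 * r * s := by
      rw [hDdef, show 4 * L * t = (2 * r * s) ^ 2 by rw [mul_pow, mul_pow, hr2, hs2]; ring]
      exact Real.sqrt_sq (by positivity)
    have hceq : c = 2 * r / s := by
      rw [hcdef, hDrs, ← hs2]
      field_simp
    have hCeq : C = s ^ 3 := by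
      rw [hCdef, ← hs2]
      field_simp
    have key : 2 * (C * (2 / c ^ 3 + 2 * D * (1 / c ^ 2)))
        = s ^ 6 * (1 / (2 * r ^ 3) + 2 / r) := by
      rw [hCeq, hceq, hDrs]
      field_simp
    rw [key, ← hs2, show (s ^ 2) ^ 3 = s ^ 6 * 1 by ring]
    apply mul_le_mul_of_nonneg_left _ (by positivity)
    have e1 : 1 / (2 * r ^ 3) ≤ 1 / 54 := by
      apply one_div_le_one_div_of_le (by norm_num)
      nlinarith
    have e2 : 2 / r ≤ 2 / 3 := by
      rw [div_le_div_iff₀ hrpos (by norm_num)]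
      linarith
    linarith
  calc 2 * ∫ y in Ioi (0:ℝ), gaussianPDFReal 0 t.toNNReal y * f y
      ≤ 2 * ∫ y in Ioi (0:ℝ), H y := by linarith [hmono]
    _ = 2 * (C * (2 / c ^ 3 + 2 * D * (1 / c ^ 2))) := by rw [hHval]
    _ ≤ t ^ 3 := hfinal


/-- Truncation-error estimates for truncated Wiener increments: with truncation level
`D_{Δt} = √(4|log Δt|Δt)` and `μ` the Gaussian measure of mean `0` and variance `Δt`,
for all sufficiently small `Δt ∈ (0,1)` one has
`∫ (x − T(x))² dμ ≤ Δt³` and `∫ (x² − T(x)²) dμ ≤ Δt³`. -/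
theorem truncation_error_estimates :
    ∃ δ : ℝ, 0 < δ ∧ δ < 1 ∧
      ∀ Δt : ℝ, 0 < Δt → Δt ≤ δ →
        (∫ x, (x - truncAt (Real.sqrt (4 * |Real.log Δt| * Δt)) x) ^ 2
            ∂(gaussianReal 0 Δt.toNNReal)) ≤ Δt ^ 3 ∧
        (∫ x, (x ^ 2 - truncAt (Real.sqrt (4 * |Real.log Δt| * Δt)) x ^ 2)
            ∂(gaussianReal 0 Δt.toNNReal)) ≤ Δt ^ 3 := by
  refine ⟨Real.exp (-9), Real.exp_pos _, by rw [Real.exp_lt_one_iff]; norm_num, ?_⟩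
  intro Δt ht hte
  have hDnn : 0 ≤ Real.sqrt (4 * |Real.log Δt| * Δt) := Real.sqrt_nonneg _
  constructor
  · apply main_bound Δt ht hte
    · intro x; exact sq_nonneg _
    · intro x
      rcases abs_choice x with h | h
      · rw [h]
      · rw [h, TruncAux.trunc_neg hDnn]; ring
    · intro y hy0 hyD
      rw [TruncAux.trunc_eq_self (by rwa [abs_of_nonneg hy0])]
      simp
    · intro y hy
      rw [TruncAux.trunc_eq_of_ge hDnn hy]
      nlinarith [sub_nonneg.mpr hy, hDnn]
  · apply main_bound Δt ht hte
    · intro x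
      have h1 := TruncAux.abs_trunc_le (D := Real.sqrt (4 * |Real.log Δt| * Δt)) (x := x) hDnn
      have h2 : (truncAt (Real.sqrt (4 * |Real.log Δt| * Δt)) x) ^ 2 ≤ x ^ 2 := by
        rw [← sq_abs (truncAt _ x), ← sq_abs x]
        exact pow_le_pow_left₀ (abs_nonneg _) h1 2
      linarith
    · intro x
      rcases abs_choice x with h | h
      · rw [h]
      · rw [h, TruncAux.trunc_neg hDnn]; ring
    · intro y hy0 hyD
      rw [TruncAux.trunc_eq_self (by rwa [abs_of_nonneg hy0])]
      ring
    · intro y hy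
      rw [TruncAux.trunc_eq_of_ge hDnn hy]
      have : y ^ 2 - (Real.sqrt (4 * |Real.log Δt| * Δt)) ^ 2
          = (y - Real.sqrt (4 * |Real.log Δt| * Δt)) ^ 2
            + 2 * Real.sqrt (4 * |Real.log Δt| * Δt)
              * (y - Real.sqrt (4 * |Real.log Δt| * Δt)) := by ring
      linarith
end
end
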